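/- arXiv:1308.4557 — 2 statements merged into one kernel-verified Lean document; each statement's English description precedes it below -/
import Mathlib

section
/- In CP*[Rel], the functor F sends a small groupoid G to the pair (Mor(G), ∼) where (a,b) ∼ (c,d) iff a⁻¹b and c⁻¹d are both defined and equal; for this partial equivalence relation ∼ on Mor(G) × Mor(G), the quotient Dom(∼)/∼ is in bijection with Mor(G), via h ↦ [id_{cod(h)}, h]∼ with inverse [g,f]∼ ↦ g⁻¹f. -/
open CategoryTheory

/-- The morphism set of a groupoid. -/
def GrpMor (G : Type*) [Groupoid G] : Type _ := Σ X Y : G, X ⟶ Y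

/-- For morphisms `b : X → Z` and `a : Y → Z` with common codomain
(`h : cod b = cod a`), the morphism `a⁻¹b : X → Y`. -/
def invProd {G : Type*} [Groupoid G] (a b : GrpMor G) (h : b.2.1 = a.2.1) :
    GrpMor G :=
  ⟨b.1, a.1, b.2.2 ≫ eqToHom h ≫ Groupoid.inv a.2.2⟩

/-- The partial equivalence relation `∼` on `Mor(G) × Mor(G)` underlying
`F(G)`: `(a,b) ∼ (c,d)` iff `a⁻¹b` and `c⁻¹d` are both defined (common
codomains) and equal. -/
def FRel (G : Type*) [Groupoid G] : GrpMor G × GrpMor G → GrpMor G × GrpMor G → Prop :=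
  fun p q => ∃ (h1 : p.2.2.1 = p.1.2.1) (h2 : q.2.2.1 = q.1.2.1),
    invProd p.1 p.2 h1 = invProd q.1 q.2 h2

/-- The domain of a partial equivalence relation. -/
def PerDom {X : Type*} (r : X → X → Prop) : Type _ := {x : X // r x x}

/-- The quotient `Dom(∼)/∼`. -/
def PerQuot {X : Type*} (r : X → X → Prop) : Type _ :=
  Quot (fun a b : PerDom r => r a.val b.val)

namespace GrpMor

variable {G : Type*} [Groupoid G]

def idPair (h : GrpMor G) : PerDom (FRel G) :=
  ⟨(⟨h.2.1, h.2.1, 𝟙 h.2.1⟩, h), rfl, rfl, rfl⟩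

lemma invProd_id_left (h : GrpMor G) :
    invProd (⟨h.2.1, h.2.1, 𝟙 h.2.1⟩ : GrpMor G) h rfl = h := by
  obtain ⟨X, Y, f⟩ := h
  simp only [invProd, eqToHom_refl, Groupoid.inv_eq_inv, IsIso.inv_id, Category.comp_id]
  rfl

lemma symmetric_fRel : Symmetric (FRel G) :=
  fun _ _ ⟨h1, h2, he⟩ => ⟨h2, h1, he.symm⟩

lemma transitive_fRel : Transitive (FRel G) :=
  fun _ _ _ ⟨h1, _, he⟩ ⟨_, h3, he'⟩ => ⟨h1, h3, he.trans he'⟩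

lemma fRel_idPair_invProd (x : PerDom (FRel G)) :
    FRel G (idPair (invProd x.val.1 x.val.2 x.property.1)).val x.val :=
  ⟨rfl, x.property.1, invProd_id_left _⟩

def perQuotEquiv (G : Type*) [Groupoid G] : GrpMor G ≃ PerQuot (FRel G) where
  toFun h := Quot.mk _ (idPair h)
  invFun := Quot.lift (fun x => invProd x.val.1 x.val.2 x.property.1)
    fun _ _ ⟨_, _, he⟩ => he
  left_inv := invProd_id_left
  right_inv := Quot.ind fun x => Quot.sound (fRel_idPair_invProd x)

end GrpMor

open GrpMor in
/-- For a small groupoid `G`, the relation `∼` of `F(G)` is a partial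
equivalence relation, and the quotient `Dom(∼)/∼` is in bijection with
`Mor(G)`, via `h ↦ [id_{cod h}, h]∼` with inverse `[g,f]∼ ↦ g⁻¹f`. -/
theorem stmt16 (G : Type*) [Groupoid G] :
    Symmetric (FRel G) ∧ Transitive (FRel G) ∧
    ∃ e : GrpMor G ≃ PerQuot (FRel G),
      (∀ h : GrpMor G, ∃ x : PerDom (FRel G),
        Quot.mk _ x = e h ∧
        x.val = ((⟨h.2.1, h.2.1, 𝟙 h.2.1⟩ : GrpMor G), h)) ∧
      (∀ (x : PerDom (FRel G)) (hc : x.val.2.2.1 = x.val.1.2.1),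
        e.symm (Quot.mk _ x) = invProd x.val.1 x.val.2 hc) :=
  ⟨symmetric_fRel, transitive_fRel, perQuotEquiv G,
    fun h => ⟨idPair h, rfl, rfl⟩, fun _ _ => rfl⟩
end

section
/- Let X = {0,1,2} and let ∼ be the partial equivalence relation on X×X relating each of (0,0),(1,1),(2,2),(0,1),(1,0),(1,2),(2,1) to itself and nothing else. Then ∼ satisfies the CPM-compatibility condition ((x,x')∼(y,y') implies (x',x)∼(y',y) and (x,x)∼(y,y)), but there is no small groupoid G with exactly 3 objects and 7 morphisms whose identity-and-inverse structure is compatible with ∼ via a bijection β : Mor(G) → Dom(∼)/∼ satisfying: β(g) = [x,x']∼ implies β(g⁻¹) = [x',x]∼ and β(id_{dom(g)}) = [x,x]∼. -/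
/-
A labelling `ℓ : Mor(G) → X × X` that is injective and respects inverses and identities is
forced to be `ℓ g = (o (dom g), o (cod g))` for an injective labelling `o` of the objects:
the first coordinate of `ℓ g` is read off `id_{dom g}`, the second off `id_{dom g⁻¹}`.
Composition in `G` then makes the set of labels transitive. The labels of `∼` are the seven
listed pairs, which contain `(0,1)` and `(1,2)` but not `(0,2)`.
-/

open CategoryTheory

/-- The inverse of a groupoid morphism. -/
def grpInv (G : Type*) [Groupoid G] (f : GrpMor G) : GrpMor G :=
  ⟨f.2.1, f.1, Groupoid.inv f.2.2⟩

/-- The identity on the domain of a groupoid morphism. -/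
def grpIdDom (G : Type*) [Groupoid G] (f : GrpMor G) : GrpMor G :=
  ⟨f.1, f.1, 𝟙 f.1⟩

/-- The partial equivalence relation `∼` on `{0,1,2} × {0,1,2}` relating each
of `(0,0),(1,1),(2,2),(0,1),(1,0),(1,2),(2,1)` to itself and nothing else. -/
def sRel : Fin 3 × Fin 3 → Fin 3 × Fin 3 → Prop := fun p q =>
  p = q ∧ p ∈ ({(0,0), (1,1), (2,2), (0,1), (1,0), (1,2), (2,1)} :
    Set (Fin 3 × Fin 3))

namespace PerQuot

variable {Y : Type*} {r : Y → Y → Prop}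

def val (hr : ∀ a b, r a b → a = b) : PerQuot r → Y :=
  Quot.lift Subtype.val fun _ _ h => hr _ _ h

variable (hr : ∀ a b, r a b → a = b)

theorem val_mk (a : PerDom r) : val hr (Quot.mk _ a) = a.val := rfl

theorem val_self (q : PerQuot r) : r (val hr q) (val hr q) := by
  induction q using Quot.ind with
  | _ a => exact a.property

theorem mk_val (q : PerQuot r) : Quot.mk _ (⟨val hr q, val_self hr q⟩ : PerDom r) = q := by
  induction q using Quot.ind with
  | _ a => rfl

theorem val_injective : Function.Injective (val hr) := by
  intro q q' h
  rw [← mk_val hr q, ← mk_val hr q']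
  exact congrArg _ (Subtype.ext h)

end PerQuot

namespace GrpMor

variable {G : Type*} [Groupoid G] {X : Type*} {ℓ : GrpMor G → X × X}

def mk {A B : G} (f : A ⟶ B) : GrpMor G := ⟨A, B, f⟩

theorem exists_eq_mk (g : GrpMor G) : ∃ (A B : G) (f : A ⟶ B), g = mk f := ⟨_, _, g.2.2, rfl⟩

def objLabel (ℓ : GrpMor G → X × X) (A : G) : X := (ℓ (mk (𝟙 A))).1

variable (hinv : ∀ g, ℓ (grpInv G g) = (ℓ g).swap)
  (hid : ∀ g, ℓ (grpIdDom G g) = ((ℓ g).1, (ℓ g).1))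
include hinv hid

theorem label_mk {A B : G} (f : A ⟶ B) : ℓ (mk f) = (objLabel ℓ A, objLabel ℓ B) := by
  have hdom : (ℓ (grpIdDom G (mk f))).1 = (ℓ (mk f)).1 := by rw [hid]
  have hcod : (ℓ (grpIdDom G (grpInv G (mk f)))).1 = (ℓ (mk f)).2 := by rw [hid, hinv]; rfl
  exact Prod.ext hdom.symm hcod.symm

theorem objLabel_injective (hℓ : Function.Injective ℓ) : Function.Injective (objLabel ℓ) := by
  intro A B h
  have : ℓ (mk (𝟙 A)) = ℓ (mk (𝟙 B)) := by rw [label_mk hinv hid, label_mk hinv hid, h]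
  exact congrArg Sigma.fst (hℓ this)

theorem exists_label_comp (hℓ : Function.Injective ℓ) {x y z : X} {f g : GrpMor G}
    (hf : ℓ f = (x, y)) (hg : ℓ g = (y, z)) : ∃ h : GrpMor G, ℓ h = (x, z) := by
  obtain ⟨A, B, f, rfl⟩ := exists_eq_mk f
  obtain ⟨B', C, g, rfl⟩ := exists_eq_mk g
  rw [label_mk hinv hid, Prod.mk.injEq] at hf hg
  obtain rfl : B = B' := objLabel_injective hinv hid hℓ (hf.2.trans hg.1.symm)
  exact ⟨mk (f ≫ g), by rw [label_mk hinv hid, hf.1, hg.2]⟩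

end GrpMor

section Compatible

variable {G : Type*} [Groupoid G] {X : Type*} {r : X × X → X × X → Prop}

def IsCompatible (β : GrpMor G ≃ PerQuot r) : Prop :=
  ∀ (g : GrpMor G) (x x' : X) (h : r (x, x') (x, x')),
    β g = Quot.mk _ (⟨(x, x'), h⟩ : PerDom r) →
      (∃ h' : r (x', x) (x', x), β (grpInv G g) = Quot.mk _ (⟨(x', x), h'⟩ : PerDom r)) ∧
      (∃ h'' : r (x, x) (x, x), β (grpIdDom G g) = Quot.mk _ (⟨(x, x), h''⟩ : PerDom r))

variable {β : GrpMor G ≃ PerQuot r} (hr : ∀ a b, r a b → a = b)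
include hr

theorem IsCompatible.val_grpInv (hβ : IsCompatible β) (g : GrpMor G) :
    PerQuot.val hr (β (grpInv G g)) = (PerQuot.val hr (β g)).swap := by
  obtain ⟨⟨_, e⟩, -⟩ := hβ g _ _ (PerQuot.val_self hr _) (PerQuot.mk_val hr _).symm
  rw [e]; rfl

theorem IsCompatible.val_grpIdDom (hβ : IsCompatible β) (g : GrpMor G) :
    PerQuot.val hr (β (grpIdDom G g)) =
      ((PerQuot.val hr (β g)).1, (PerQuot.val hr (β g)).1) := by
  obtain ⟨-, ⟨_, e⟩⟩ := hβ g _ _ (PerQuot.val_self hr _) (PerQuot.mk_val hr _).symm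
  rw [e]; rfl

theorem IsCompatible.rel_trans (hβ : IsCompatible β) {x y z : X}
    (hxy : r (x, y) (x, y)) (hyz : r (y, z) (y, z)) : r (x, z) (x, z) := by
  let ℓ := PerQuot.val hr ∘ β
  have hℓ : Function.Injective ℓ := (PerQuot.val_injective hr).comp β.injective
  have hlabel {p : X × X} (hp : r p p) : ∃ g, ℓ g = p := by
    obtain ⟨g, hg⟩ := β.surjective (Quot.mk _ ⟨p, hp⟩)
    exact ⟨g, (congrArg (PerQuot.val hr) hg).trans (PerQuot.val_mk hr _)⟩
  obtain ⟨f, hf⟩ := hlabel hxy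
  obtain ⟨g, hg⟩ := hlabel hyz
  obtain ⟨h, hh⟩ := GrpMor.exists_label_comp (hβ.val_grpInv hr) (hβ.val_grpIdDom hr) hℓ hf hg
  exact hh ▸ PerQuot.val_self hr (β h)

end Compatible

/-- `∼` is a partial equivalence relation satisfying the CPM-compatibility
condition, but no small groupoid with exactly 3 objects and 7 morphisms has its
identity-and-inverse structure compatible with `∼` via a bijection
`β : Mor(G) → Dom(∼)/∼`. -/
theorem stmt17 :
    Symmetric sRel ∧ Transitive sRel ∧
    (∀ x x' y y' : Fin 3, sRel (x, x') (y, y') →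
      sRel (x', x) (y', y) ∧ sRel (x, x) (y, y)) ∧
    ¬ ∃ (G : Type) (instG : Groupoid G)
        (β : @GrpMor G instG ≃ PerQuot sRel),
        Nat.card G = 3 ∧ Nat.card (@GrpMor G instG) = 7 ∧
        (∀ (g : @GrpMor G instG) (x x' : Fin 3) (h : sRel (x, x') (x, x')),
          β g = Quot.mk _ (⟨(x, x'), h⟩ : PerDom sRel) →
            (∃ h' : sRel (x', x) (x', x),
              β (@grpInv G instG g) = Quot.mk _ (⟨(x', x), h'⟩ : PerDom sRel)) ∧
            (∃ h'' : sRel (x, x) (x, x),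
              β (@grpIdDom G instG g) = Quot.mk _ (⟨(x, x), h''⟩ : PerDom sRel))) := by
  refine ⟨?_, ?_, ?_, ?_⟩
  · rintro p q ⟨rfl, hp⟩
    exact ⟨rfl, hp⟩
  · rintro p q s ⟨rfl, hp⟩ ⟨rfl, -⟩
    exact ⟨rfl, hp⟩
  · rintro x x' y y' ⟨heq, hmem⟩
    obtain ⟨rfl, rfl⟩ := Prod.ext_iff.mp heq
    refine ⟨⟨rfl, ?_⟩, rfl, ?_⟩ <;> revert hmem <;>
      simp only [Set.mem_insert_iff, Set.mem_singleton_iff, Prod.mk.injEq] <;>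
      revert x x' <;> decide
  · rintro ⟨G, instG, β, -, -, hβ⟩
    have h02 : sRel (0, 2) (0, 2) :=
      IsCompatible.rel_trans (fun _ _ h => h.1) hβ (y := 1) ⟨rfl, by simp⟩ ⟨rfl, by simp⟩
    simp [sRel] at h02
end
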